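/- Let m = 2^M with M ≥ 3, and define the sequence w₀ = m + p for some p ∈ {0, 2, 4} chosen so that w₀ ≡ 1 (mod 3), and w_{t} = s + 3 whenever w_{t−1} = 3s + 1 (before each step, w_{t−1} is adjusted by adding an even number in {0,2,4} to make it ≡ 1 mod 3). Then every term of the sequence is even, and the sequence reaches a value at most 8 after at most ⌈log₃(2^{M+1} − 7)⌉ steps. -/

import Mathlib

/-!
Padding `a` by `p ≤ 4` to `3s + 1` and folding to `s + 3` gives `3(s + 3) ≤ a + 12`, so the
excess `w - 6` over the fixed point shrinks by a factor `3` per step, and `s ≡ a + 1 (mod 2)`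
makes each fold preserve parity. After `N` steps with `3^N ≥ 2^(M+1) - 7` the excess of
`w_N` is below `3`, i.e. `w_N ≤ 8`.
-/

def IsFoldStep (a b : ℕ) : Prop :=
  ∃ p ∈ ({0, 2, 4} : Finset ℕ), ∃ s : ℕ, 1 ≤ s ∧ a + p = 3 * s + 1 ∧ b = s + 3

namespace IsFoldStep

variable {a b : ℕ}

theorem even_iff (h : IsFoldStep a b) : Even b ↔ Even a := by
  obtain ⟨p, hp, s, -, hpad, rfl⟩ := h
  simp only [Finset.mem_insert, Finset.mem_singleton] at hp
  simp only [Nat.even_iff]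
  omega

theorem three_mul_le (h : IsFoldStep a b) : 3 * b ≤ a + 12 := by
  obtain ⟨p, hp, s, -, hpad, rfl⟩ := h
  simp only [Finset.mem_insert, Finset.mem_singleton] at hp
  omega

end IsFoldStep

theorem pow_mul_le_of_forall_mul_succ_le {R : Type*} [Semiring R] [PartialOrder R]
    [IsOrderedRing R] {c : R} (hc : 0 ≤ c) {u : ℕ → R} (h : ∀ n, c * u (n + 1) ≤ u n) :
    ∀ n, c ^ n * u n ≤ u 0
  | 0 => by rw [pow_zero, one_mul]
  | n + 1 =>
    calc c ^ (n + 1) * u (n + 1) = c ^ n * (c * u (n + 1)) := by rw [pow_succ, mul_assoc]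
      _ ≤ c ^ n * u n := mul_le_mul_of_nonneg_left (h n) (pow_nonneg hc n)
      _ ≤ u 0 := pow_mul_le_of_forall_mul_succ_le hc h n

theorem Real.le_pow_natCeil_logb {b x : ℝ} (hb : 1 < b) (hx : 0 < x) :
    x ≤ b ^ ⌈Real.logb b x⌉₊ := by
  rw [← Real.rpow_natCast, ← Real.logb_le_iff_le_rpow hb hx]
  exact Nat.le_ceil _

/-- The repeated snake-embedding width reduction: starting from width `2^M` (`M ≥ 3`),
at each step pad by an even `p ∈ {0,2,4}` to reach the form `3s+1` and fold to width
`s+3`. Then every width in the sequence is even, and the width drops to at most `8`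
within `⌈log₃(2^(M+1) − 7)⌉` steps. -/
theorem stmt_18 (M : ℕ) (hM : 3 ≤ M) (w : ℕ → ℕ) (h0 : w 0 = 2 ^ M)
    (hstep : ∀ t : ℕ, ∃ p ∈ ({0, 2, 4} : Finset ℕ), ∃ s : ℕ, 1 ≤ s ∧
      w t + p = 3 * s + 1 ∧ w (t + 1) = s + 3) :
    (∀ t, Even (w t)) ∧
      ∃ t ≤ ⌈Real.logb 3 ((2 : ℝ) ^ (M + 1) - 7)⌉₊, w t ≤ 8 := by
  have hfold : ∀ t, IsFoldStep (w t) (w (t + 1)) := hstep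
  refine ⟨fun t => ?_, ⌈Real.logb 3 ((2 : ℝ) ^ (M + 1) - 7)⌉₊, le_rfl, ?_⟩
  · induction t with
    | zero => exact h0 ▸ (Nat.even_pow' (by omega)).2 even_two
    | succ t ih => exact (hfold t).even_iff.2 ih
  set N := ⌈Real.logb 3 ((2 : ℝ) ^ (M + 1) - 7)⌉₊
  have hdecay : (3 : ℝ) ^ N * (w N - 6) ≤ w 0 - 6 := by
    refine pow_mul_le_of_forall_mul_succ_le (u := fun t => (w t : ℝ) - 6) (by norm_num)
      (fun t => ?_) N
    have : (3 * w (t + 1) : ℝ) ≤ w t + 12 := by exact_mod_cast (hfold t).three_mul_le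
    linarith
  have h2M : (2 : ℝ) ^ 4 ≤ 2 ^ (M + 1) := pow_le_pow_right₀ (by norm_num) (by omega)
  have hN : (2 : ℝ) ^ (M + 1) - 7 ≤ 3 ^ N := Real.le_pow_natCeil_logb (by norm_num) (by linarith)
  by_contra! hlarge
  have hexcess : (3 : ℝ) ≤ w N - 6 := by
    have : (9 : ℝ) ≤ w N := by exact_mod_cast hlarge
    linarith
  have h3N : (0 : ℝ) ≤ 3 ^ N := by positivity
  have hscaled := mul_le_mul_of_nonneg_left hexcess h3N
  rw [h0, Nat.cast_pow, Nat.cast_ofNat] at hdecay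
  rw [pow_succ] at hN
  linarith
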